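/- arXiv:2209.12736 — 4 statements merged into one kernel-verified Lean document; each statement's English description precedes it below -/
import Mathlib

section
/- Define d⁻_GH(X,Y) := (1/2) inf { dist⁻(R) : R a correspondence from X to Y } for sets X, Y equipped with signed Lorentzian distance functions, where dist⁻(R) := sup { |σ_X(x,x') − σ_Y(y,y')| : (x,y), (x',y') ∈ R }. Then d⁻_GH satisfies the triangle inequality: d⁻_GH(X,Z) ≤ d⁻_GH(X,Y) + d⁻_GH(Y,Z). -/
open scoped ENNReal

def IsSignedLorentzianDist {X : Type*} (σ : X → X → ℝ) : Prop :=
  (∀ x y, σ x y = - σ y x) ∧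
  (∀ x y z, 0 < σ x y → 0 < σ y z → σ x y + σ y z ≤ σ x z)

/-- `R ⊆ X × Y` is a correspondence: surjective onto both factors. -/
def IsCorrespondence {X Y : Type*} (R : Set (X × Y)) : Prop :=
  (∀ x, ∃ y, (x, y) ∈ R) ∧ (∀ y, ∃ x, (x, y) ∈ R)

/-- Distortion of a relation w.r.t. signed Lorentzian distance functions. -/
noncomputable def distMinus {X Y : Type*} (σX : X → X → ℝ) (σY : Y → Y → ℝ)
    (R : Set (X × Y)) : ℝ≥0∞ :=
  ⨆ p ∈ R, ⨆ q ∈ R, ENNReal.ofReal |σX p.1 q.1 - σY p.2 q.2|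

/-- The Lorentzian Gromov–Hausdorff distance `d⁻_GH`. -/
noncomputable def dGHminus {X Y : Type*} (σX : X → X → ℝ) (σY : Y → Y → ℝ) : ℝ≥0∞ :=
  (1 / 2) * ⨅ (R : Set (X × Y)) (_ : IsCorrespondence R), distMinus σX σY R

/-- Composition of relations. -/
def relComp {X Y Z : Type*} (R : Set (X × Y)) (S : Set (Y × Z)) : Set (X × Z) :=
  {p | ∃ y, (p.1, y) ∈ R ∧ (y, p.2) ∈ S}

lemma relComp_isCorrespondence {X Y Z : Type*} {R : Set (X × Y)} {S : Set (Y × Z)}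
    (hR : IsCorrespondence R) (hS : IsCorrespondence S) :
    IsCorrespondence (relComp R S) := by
  constructor
  · intro x
    obtain ⟨y, hy⟩ := hR.1 x
    obtain ⟨z, hz⟩ := hS.1 y
    exact ⟨z, y, hy, hz⟩
  · intro z
    obtain ⟨y, hy⟩ := hS.2 z
    obtain ⟨x, hx⟩ := hR.2 y
    exact ⟨x, y, hx, hy⟩

lemma distMinus_relComp_le {X Y Z : Type*} (σX : X → X → ℝ) (σY : Y → Y → ℝ)
    (σZ : Z → Z → ℝ) (R : Set (X × Y)) (S : Set (Y × Z)) :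
    distMinus σX σZ (relComp R S) ≤ distMinus σX σY R + distMinus σY σZ S := by
  refine iSup₂_le fun p hp => iSup₂_le fun q hq => ?_
  obtain ⟨y, hy1, hy2⟩ := hp
  obtain ⟨y', hy'1, hy'2⟩ := hq
  calc ENNReal.ofReal |σX p.1 q.1 - σZ p.2 q.2|
      ≤ ENNReal.ofReal (|σX p.1 q.1 - σY y y'| + |σY y y' - σZ p.2 q.2|) := by
        apply ENNReal.ofReal_le_ofReal
        have := abs_sub_abs_le_abs_sub (σX p.1 q.1 - σY y y') (σX p.1 q.1 - σZ p.2 q.2)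
        calc |σX p.1 q.1 - σZ p.2 q.2|
            = |(σX p.1 q.1 - σY y y') + (σY y y' - σZ p.2 q.2)| := by ring_nf
          _ ≤ _ := abs_add_le _ _
    _ ≤ ENNReal.ofReal |σX p.1 q.1 - σY y y'| + ENNReal.ofReal |σY y y' - σZ p.2 q.2| :=
        ENNReal.ofReal_add_le
    _ ≤ distMinus σX σY R + distMinus σY σZ S := by
        gcongr
        · exact le_trans (le_refl _) <| le_trans
            (le_iSup₂ (f := fun q (_ : q ∈ R) => ENNReal.ofReal
              |σX (p.1, y).1 q.1 - σY (p.1, y).2 q.2|) (q.1, y') hy'1)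
            (le_iSup₂ (f := fun p (_ : p ∈ R) => ⨆ q ∈ R, ENNReal.ofReal
              |σX p.1 q.1 - σY p.2 q.2|) (p.1, y) hy1)
        · exact le_trans (le_refl _) <| le_trans
            (le_iSup₂ (f := fun q (_ : q ∈ S) => ENNReal.ofReal
              |σY (y, p.2).1 q.1 - σZ (y, p.2).2 q.2|) (y', q.2) hy'2)
            (le_iSup₂ (f := fun p (_ : p ∈ S) => ⨆ q ∈ S, ENNReal.ofReal
              |σY p.1 q.1 - σZ p.2 q.2|) (y, p.2) hy2)

theorem dGHminus_triangle {X Y Z : Type*}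
    (σX : X → X → ℝ) (σY : Y → Y → ℝ) (σZ : Z → Z → ℝ)
    (hX : IsSignedLorentzianDist σX) (hY : IsSignedLorentzianDist σY)
    (hZ : IsSignedLorentzianDist σZ) :
    dGHminus σX σZ ≤ dGHminus σX σY + dGHminus σY σZ := by
  unfold dGHminus
  rw [← mul_add]
  apply mul_le_mul_right
  rw [iInf_subtype', iInf_subtype', iInf_subtype', ENNReal.iInf_add]
  refine le_iInf fun r => ?_
  rw [ENNReal.add_iInf]
  refine le_iInf fun s => ?_
  refine iInf_le_of_le ⟨relComp r.1 s.1, relComp_isCorrespondence r.2 s.2⟩ ?_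
  exact distMinus_relComp_le σX σY σZ r.1 s.1
end

section
/- Let (M,d) be a metric space and define on X := ℝ × M the function σ_d((t,p),(s,q)) := sqrt((s−t)² − d(p,q)²) if s − t ≥ d(p,q), and σ_d((t,p),(s,q)) := −σ_d((s,q),(t,p)) if t − s ≥ d(q,p), and 0 otherwise. Then σ_d is a signed Lorentzian distance function on X: it is antisymmetric and satisfies σ_d(x,z) ≥ σ_d(x,y) + σ_d(y,z) whenever σ_d(x,y) > 0 and σ_d(y,z) > 0. -/
/-- The signed Lorentzian distance of the causal cylinder `ℝ × M` over a metric space. -/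
noncomputable def cylSigma {M : Type*} [MetricSpace M] (x y : ℝ × M) : ℝ :=
  if dist x.2 y.2 ≤ y.1 - x.1 then Real.sqrt ((y.1 - x.1) ^ 2 - dist x.2 y.2 ^ 2)
  else if dist x.2 y.2 ≤ x.1 - y.1 then - Real.sqrt ((x.1 - y.1) ^ 2 - dist x.2 y.2 ^ 2)
  else 0

lemma cyl_key (a b c u v : ℝ) (ha : 0 ≤ a) (hb : 0 ≤ b) (hc : 0 ≤ c)
    (hu : a ≤ u) (hv : b ≤ v) (htri : c ≤ a + b) :
    Real.sqrt (u ^ 2 - a ^ 2) + Real.sqrt (v ^ 2 - b ^ 2) ≤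
      Real.sqrt ((u + v) ^ 2 - c ^ 2) := by
  have hA : 0 ≤ u ^ 2 - a ^ 2 := by nlinarith
  have hB : 0 ≤ v ^ 2 - b ^ 2 := by nlinarith
  have hadd : 0 ≤ Real.sqrt (u ^ 2 - a ^ 2) + Real.sqrt (v ^ 2 - b ^ 2) :=
    add_nonneg (Real.sqrt_nonneg _) (Real.sqrt_nonneg _)
  rw [show (u + v) ^ 2 - c ^ 2 = ((u+v)^2 - c^2) from rfl]
  rw [← Real.sqrt_sq hadd]
  apply Real.sqrt_le_sqrt
  have hsq : (Real.sqrt (u ^ 2 - a ^ 2) + Real.sqrt (v ^ 2 - b ^ 2)) ^ 2 =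
      (u ^ 2 - a ^ 2) + (v ^ 2 - b ^ 2) +
        2 * Real.sqrt ((u ^ 2 - a ^ 2) * (v ^ 2 - b ^ 2)) := by
    rw [add_sq, Real.sq_sqrt hA, Real.sq_sqrt hB, Real.sqrt_mul hA]
    ring
  rw [hsq]
  have hab : 0 ≤ u * v - a * b := by nlinarith
  have h1 : (u ^ 2 - a ^ 2) * (v ^ 2 - b ^ 2) ≤ (u * v - a * b) ^ 2 := by nlinarith [sq_nonneg (u * b - a * v)]
  have h2 : Real.sqrt ((u ^ 2 - a ^ 2) * (v ^ 2 - b ^ 2)) ≤ u * v - a * b := by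
    calc Real.sqrt ((u ^ 2 - a ^ 2) * (v ^ 2 - b ^ 2)) ≤ Real.sqrt ((u * v - a * b) ^ 2) :=
          Real.sqrt_le_sqrt h1
      _ = u * v - a * b := Real.sqrt_sq hab
  nlinarith [h2, htri, hc]

theorem cylSigma_isSignedLorentzianDist {M : Type*} [MetricSpace M] :
    IsSignedLorentzianDist (cylSigma (M := M)) := by
  constructor
  · intro x y
    unfold cylSigma
    rw [dist_comm y.2 x.2]
    split_ifs with h1 h2 h3
    · -- degenerate: both directions
      have hd : dist x.2 y.2 = 0 :=
        le_antisymm (by linarith [dist_nonneg (x := x.2) (y := y.2)]) dist_nonneg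
      have ht : y.1 - x.1 = 0 := by
        have := dist_nonneg (x := x.2) (y := y.2); linarith
      rw [hd, ht, show x.1 - y.1 = 0 by linarith]
      simp
    · ring
    · rfl
    · simp
  · intro x y z hxy hyz
    unfold cylSigma at hxy hyz
    split_ifs at hxy with h1 h1'
    · split_ifs at hyz with h2 h2'
      · have hp1 : 0 < (y.1 - x.1) ^ 2 - dist x.2 y.2 ^ 2 := Real.sqrt_pos.mp hxy
        have hp2 : 0 < (z.1 - y.1) ^ 2 - dist y.2 z.2 ^ 2 := Real.sqrt_pos.mp hyz
        have hxy' : dist x.2 y.2 < y.1 - x.1 := by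
          nlinarith [dist_nonneg (x := x.2) (y := y.2)]
        have hyz' : dist y.2 z.2 < z.1 - y.1 := by
          nlinarith [dist_nonneg (x := y.2) (y := z.2)]
        have htri : dist x.2 z.2 ≤ dist x.2 y.2 + dist y.2 z.2 := dist_triangle _ _ _
        have hcond : dist x.2 z.2 ≤ z.1 - x.1 := by linarith
        simp only [cylSigma, if_pos h1, if_pos h2, if_pos hcond]
        have key := cyl_key (dist x.2 y.2) (dist y.2 z.2) (dist x.2 z.2)
          (y.1 - x.1) (z.1 - y.1) dist_nonneg dist_nonneg dist_nonneg
          (le_of_lt hxy') (le_of_lt hyz') htri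
        have heq : z.1 - x.1 = (y.1 - x.1) + (z.1 - y.1) := by ring
        rw [heq]
        exact key
      · exact absurd hyz (by simp [Real.sqrt_nonneg])
      · exact absurd hyz (lt_irrefl 0)
    · exact absurd hxy (by simp [Real.sqrt_nonneg])
    · exact absurd hxy (lt_irrefl 0)
end

section
/- If {fₙ : X → ℝ | n ∈ ℕ} is a countable family of functions on a totally ordered set X such that for all x, y: x ≤ y ⇔ (∀n, fₙ(x) ≤ fₙ(y)), then F := Σₙ 2^{−n} · arctan(fₙ(x)) is a single real-valued function with x ≤ y ⇔ F(x) ≤ F(y); i.e., a countable-size utility on a totally ordered set yields a size-1 utility. -/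
private lemma summable_aux {X : Type*} (f : ℕ → X → ℝ) (x : X) :
    Summable (fun n : ℕ => (2 : ℝ)⁻¹ ^ n * Real.arctan (f n x)) := by
  have hg : Summable (fun n : ℕ => (2 : ℝ)⁻¹ ^ n * (Real.pi / 2)) :=
    (summable_geometric_of_lt_one (by norm_num) (by norm_num)).mul_right _
  apply Summable.of_norm
  refine Summable.of_nonneg_of_le (fun n => norm_nonneg _) (fun n => ?_) hg
  rw [norm_mul]
  have h1 : ‖(2 : ℝ)⁻¹ ^ n‖ = (2 : ℝ)⁻¹ ^ n := by
    rw [norm_pow, norm_inv]; norm_num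
  rw [h1]
  exact mul_le_mul_of_nonneg_left
    (le_of_lt (abs_lt.mpr ⟨Real.neg_pi_div_two_lt_arctan _, Real.arctan_lt_pi_div_two _⟩)) (by positivity)

theorem countable_utility_to_size_one {X : Type*} [LinearOrder X]
    (f : ℕ → X → ℝ)
    (hf : ∀ x y : X, x ≤ y ↔ ∀ n, f n x ≤ f n y) :
    ∀ x y : X, x ≤ y ↔
      (∑' n : ℕ, (2 : ℝ)⁻¹ ^ n * Real.arctan (f n x)) ≤
      (∑' n : ℕ, (2 : ℝ)⁻¹ ^ n * Real.arctan (f n y)) := by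
  intro x y
  constructor
  · intro hxy
    apply Summable.tsum_le_tsum _ (summable_aux f x) (summable_aux f y)
    intro n
    exact mul_le_mul_of_nonneg_left
      (Real.arctan_strictMono.monotone ((hf x y).mp hxy n)) (by positivity)
  · intro hF
    by_contra hxy
    rcases not_le.mp hxy with hyx
    have hle : ∀ n, f n y ≤ f n x := (hf y x).mp hyx.le
    have hne : ∃ n, ¬ f n x ≤ f n y := by
      by_contra h
      push_neg at h
      exact absurd ((hf x y).mpr h) hxy
    obtain ⟨n, hn⟩ := hne
    have hlt : (∑' n : ℕ, (2 : ℝ)⁻¹ ^ n * Real.arctan (f n y)) <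
        (∑' n : ℕ, (2 : ℝ)⁻¹ ^ n * Real.arctan (f n x)) := by
      refine Summable.tsum_lt_tsum (i := n) (fun m => ?_) ?_ (summable_aux f y) (summable_aux f x)
      · exact mul_le_mul_of_nonneg_left (Real.arctan_strictMono.monotone (hle m)) (by positivity)
      · exact mul_lt_mul_of_pos_left (Real.arctan_strictMono (not_le.mp hn)) (by positivity)
    linarith
end

section
/- The causal relation of (n+1)-dimensional Minkowski space is the intersection of countably many total preorders induced by null linear functionals with rational spatial directions: for x, y ∈ ℝ^{n+1} (n ≥ 1), one has y − x ∈ J⁺ (i.e. (y₀−x₀)² ≥ Σ_{i≥1}(y_i−x_i)² and y₀ ≥ x₀) if and only if ⟨e₀ + v, y − x⟩ ≥ 0 for every unit vector v ∈ ℚⁿ with |v| = 1, where ⟨e₀+v, z⟩ := z₀ + Σ_{i≥1} v_i z_i. -/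
/-!
Cauchy–Schwarz gives `t + ⟪v, w⟫ ≥ t - ‖w‖` for unit `v`, with equality at `v = -w / ‖w‖`,
so `‖w‖ ≤ t` holds iff all these functionals are nonnegative on the unit sphere. Since they
are continuous in `v`, it suffices that rational unit vectors are dense in the sphere. For
this, reflect a fixed rational unit vector `e` in the hyperplane `aᗮ`: the result is a unit
vector, rational when `a` is, continuous in `a ≠ 0`, and equal to `u` for `a = e - u`;
approximating `e - u` by rational points approximates `u` by rational unit vectors.
-/

open scoped RealInnerProductSpace

open Set Metric Submodule

section InnerProductSpace

variable {F : Type*} [NormedAddCommGroup F] [InnerProductSpace ℝ F]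

theorem norm_le_iff_forall_norm_eq_one_inner_nonneg [Nontrivial F] (w : F) (t : ℝ) :
    ‖w‖ ≤ t ↔ ∀ v : F, ‖v‖ = 1 → 0 ≤ t + ⟪v, w⟫ := by
  refine ⟨fun h v hv => ?_, fun h => ?_⟩
  · have := neg_le_of_abs_le (abs_real_inner_le_norm v w)
    rw [hv, one_mul] at this
    linarith
  rcases eq_or_ne w 0 with rfl | hw
  · obtain ⟨v, hv⟩ := exists_norm_eq F zero_le_one
    simpa using h v hv
  · have hnorm : ‖w‖ ≠ 0 := norm_ne_zero_iff.2 hw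
    have hunit : ‖-‖w‖⁻¹ • w‖ = 1 := by simp [norm_smul, hnorm]
    have hinner : ⟪-‖w‖⁻¹ • w, w⟫ = -‖w‖ := by
      rw [real_inner_smul_left, real_inner_self_eq_norm_sq]
      field_simp
    linarith [h _ hunit]

theorem reflection_orthogonal_singleton_apply (a x : F) :
    reflection (ℝ ∙ a)ᗮ x = x - (2 * ⟪a, x⟫ / ‖a‖ ^ 2) • a := by
  rw [reflection_orthogonal_apply, reflection_singleton_apply]
  simp [mul_div_assoc, mul_smul, two_smul]

theorem continuousAt_reflection_orthogonal_singleton {a : F} (ha : a ≠ 0) (x : F) :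
    ContinuousAt (fun b => reflection (ℝ ∙ b)ᗮ x) a := by
  simp only [reflection_orthogonal_singleton_apply]
  have : ‖a‖ ^ 2 ≠ 0 := by positivity
  fun_prop (disch := assumption)

end InnerProductSpace

def EuclideanSpace.pointsOver (K : Subfield ℝ) (ι : Type*) : Set (EuclideanSpace ℝ ι) :=
  {v | ∀ i, v i ∈ K}

namespace EuclideanSpace

variable {ι : Type*} (K : Subfield ℝ)

theorem dense_pointsOver : Dense (pointsOver K ι) := by
  have hK : Dense (K : Set ℝ) :=
    Rat.denseRange_cast.mono (range_subset_iff.2 fun q => SubfieldClass.ratCast_mem K q)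
  have hpi : pointsOver K ι = PiLp.homeomorph 2 _ ⁻¹' univ.pi fun _ => (K : Set ℝ) := by
    ext; simp [pointsOver, PiLp.homeomorph]
  exact hpi ▸ (dense_pi univ fun _ _ => hK).preimage (PiLp.homeomorph 2 _).isOpenMap

variable {K} [Fintype ι]

theorem inner_mem_of_mem_pointsOver {a b : EuclideanSpace ℝ ι} (ha : a ∈ pointsOver K ι)
    (hb : b ∈ pointsOver K ι) : ⟪a, b⟫ ∈ K := by
  rw [PiLp.inner_apply]
  exact K.sum_mem fun i _ => K.mul_mem (hb i) (ha i)

theorem reflection_orthogonal_singleton_mem_pointsOver {a x : EuclideanSpace ℝ ι}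
    (ha : a ∈ pointsOver K ι) (hx : x ∈ pointsOver K ι) :
    reflection (ℝ ∙ a)ᗮ x ∈ pointsOver K ι := by
  intro i
  have hnorm : ‖a‖ ^ 2 ∈ K :=
    real_inner_self_eq_norm_sq a ▸ inner_mem_of_mem_pointsOver ha ha
  have hcoeff : 2 * ⟪a, x⟫ / ‖a‖ ^ 2 ∈ K :=
    K.div_mem (K.mul_mem (ofNat_mem K 2) (inner_mem_of_mem_pointsOver ha hx)) hnorm
  rw [reflection_orthogonal_singleton_apply]
  simp only [PiLp.sub_apply, PiLp.smul_apply, smul_eq_mul]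
  exact K.sub_mem (hx i) (K.mul_mem hcoeff (ha i))

variable (K) in
theorem sphere_subset_closure_pointsOver_inter_sphere [Nonempty ι] :
    sphere (0 : EuclideanSpace ℝ ι) 1 ⊆ closure (pointsOver K ι ∩ sphere 0 1) := by
  classical
  intro u hu
  obtain ⟨i⟩ := ‹Nonempty ι›
  set e : EuclideanSpace ℝ ι := single i 1
  have he : e ∈ pointsOver K ι ∩ sphere 0 1 := by
    refine ⟨fun j => ?_, by simp [e]⟩
    by_cases hj : j = i <;> simp [e, hj, K.one_mem, K.zero_mem]
  rcases eq_or_ne u e with rfl | hue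
  · exact subset_closure he
  have hmaps : MapsTo (fun a => reflection (ℝ ∙ a)ᗮ e) (pointsOver K ι)
      (pointsOver K ι ∩ sphere 0 1) := fun a ha =>
    ⟨reflection_orthogonal_singleton_mem_pointsOver ha he.1, by simpa using he.2⟩
  have hu' : reflection (ℝ ∙ (e - u))ᗮ e = u := reflection_sub (by simp_all [e])
  rw [← hu']
  have hdense : e - u ∈ closure (pointsOver K ι) := (dense_pointsOver K).closure_eq ▸ mem_univ _
  exact closure_mono hmaps.image_subset <|
    (continuousAt_reflection_orthogonal_singleton (sub_ne_zero.2 hue.symm) e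
      ).continuousWithinAt.mem_closure_image hdense

end EuclideanSpace

theorem minkowski_causal_iff_null_functionals (n : ℕ) (hn : 1 ≤ n)
    (x y : ℝ × EuclideanSpace ℝ (Fin n)) :
    ‖y.2 - x.2‖ ≤ y.1 - x.1 ↔
      ∀ v : EuclideanSpace ℝ (Fin n), (∀ i, ∃ q : ℚ, v i = (q : ℝ)) → ‖v‖ = 1 →
        0 ≤ (y.1 - x.1) + ⟪v, y.2 - x.2⟫ := by
  have : Nonempty (Fin n) := ⟨⟨0, hn⟩⟩
  have hrat : ∀ v ∈ EuclideanSpace.pointsOver (Rat.castHom ℝ).fieldRange (Fin n),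
      ∀ i, ∃ q : ℚ, v i = q :=
    fun v hv i => by simpa [eq_comm] using hv i
  rw [norm_le_iff_forall_norm_eq_one_inner_nonneg]
  refine ⟨fun h v _ hv => h v hv, fun h v hv => ?_⟩
  have hclosed : IsClosed {v : EuclideanSpace ℝ (Fin n) | 0 ≤ y.1 - x.1 + ⟪v, y.2 - x.2⟫} :=
    isClosed_le continuous_const (by fun_prop)
  refine closure_minimal (fun v hv => ?_) hclosed
    (EuclideanSpace.sphere_subset_closure_pointsOver_inter_sphere (Rat.castHom ℝ).fieldRange
      (mem_sphere_zero_iff_norm.2 hv))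
  exact h v (hrat v hv.1) (mem_sphere_zero_iff_norm.1 hv.2)
end
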